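/- arXiv:1401.4048 — 3 statements merged into one kernel-verified Lean document; each statement's English description precedes it below -/
import Mathlib

section
/- Let b be the sequence with b_0 = 1 and ∑_{l=0}^{p} (-1)^l C(p,l)^2 b_l = 0 for all p ≥ 1. Then every b_p is a positive integer. -/
/-!
Read backwards, the recurrence says `b p = ∑_{j<p} (-1)^j h_j` with
`h_j = C(p, j+1)^2 b (p-1-j)`. Strong induction on the invariant `p^2 b (p-1) ≤ 2 b p`
(together with positivity) shows that `2 h_{j+1} ≤ h_j`, because
`(j+2) C(p, j+2) = (p-1-j) C(p, j+1)`. An alternating sum of a nonnegative antitone sequence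
is at least `h_0 - h_1 ≥ h_0 / 2`, so `2 b p ≥ h_0 = p^2 b (p-1) > 0`, which propagates the invariant.
-/

open Finset

section AlternatingSum

variable {R : Type*} [CommRing R] [LinearOrder R] [IsStrictOrderedRing R] {f : ℕ → R}

theorem Antitone.alternating_sum_range_mem_Icc (hf : Antitone f) (hf0 : ∀ n, 0 ≤ f n) (n : ℕ) :
    ∑ j ∈ range n, (-1 : R) ^ j * f j ∈ Set.Icc 0 (f 0) := by
  induction n generalizing f with
  | zero => simpa using hf0 0
  | succ n ih =>
    obtain ⟨lower, upper⟩ :=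
      ih (f := fun j => f (j + 1)) (fun _ _ h => hf (by omega)) (fun _ => hf0 _)
    rw [zero_add] at upper
    rw [sum_range_succ']
    simp only [pow_succ, mul_neg_one, neg_mul, sum_neg_distrib, pow_zero, one_mul]
    constructor
    · linarith [hf (Nat.zero_le 1)]
    · linarith

theorem Antitone.sub_le_alternating_sum_range_succ (hf : Antitone f) (hf0 : ∀ n, 0 ≤ f n)
    (n : ℕ) : f 0 - f 1 ≤ ∑ j ∈ range (n + 1), (-1 : R) ^ j * f j := by
  have upper := (alternating_sum_range_mem_Icc (f := fun j => f (j + 1))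
    (fun _ _ h => hf (by omega)) (fun _ => hf0 _) n).2
  rw [zero_add] at upper
  rw [sum_range_succ']
  simp only [pow_succ, mul_neg_one, neg_mul, sum_neg_distrib, pow_zero, one_mul]
  linarith

end AlternatingSum

lemma neg_one_pow_sub_one_sub {R : Type*} [CommRing R] {p j : ℕ} (hj : j < p) :
    (-1 : R) ^ (p - 1 - j) = -((-1) ^ p * (-1) ^ j) := by
  obtain ⟨i, rfl⟩ := Nat.exists_eq_add_of_lt hj
  have hsq : (-1 : R) ^ j * (-1) ^ j = 1 := by rw [← mul_pow]; simp
  rw [show j + i + 1 - 1 - j = i by omega, pow_succ, pow_add]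
  linear_combination -(-1 : R) ^ i * hsq

/-- The term of index `l = p - 1 - j` of the recurrence at `p`, without its sign. -/
def recTerm (b : ℕ → ℤ) (p j : ℕ) : ℤ := (p.choose (j + 1) : ℤ) ^ 2 * b (p - 1 - j)

section Recurrence

variable {b : ℕ → ℤ} {p : ℕ}

lemma eq_sum_recTerm
    (hrec : ∑ l ∈ range (p + 1), (-1 : ℤ) ^ l * (p.choose l : ℤ) ^ 2 * b l = 0) :
    b p = ∑ j ∈ range p, (-1) ^ j * recTerm b p j := by
  rw [sum_range_succ, ← sum_range_reflect] at hrec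
  have hterm : ∀ j ∈ range p,
      (-1 : ℤ) ^ (p - 1 - j) * (p.choose (p - 1 - j) : ℤ) ^ 2 * b (p - 1 - j)
        = -(-1) ^ p * ((-1) ^ j * recTerm b p j) := by
    intro j hj
    have hj := mem_range.mp hj
    rw [neg_one_pow_sub_one_sub hj, show p - 1 - j = p - (j + 1) by omega,
      Nat.choose_symm (by omega), recTerm, show p - (j + 1) = p - 1 - j by omega]
    ring
  rw [sum_congr rfl hterm, ← mul_sum, Nat.choose_self] at hrec
  push_cast at hrec
  refine mul_left_cancel₀ (pow_ne_zero p (neg_ne_zero.mpr one_ne_zero)) ?_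
  linarith

lemma recTerm_nonneg (hpos : ∀ m < p, 0 < b m) (j : ℕ) : 0 ≤ recTerm b p j := by
  rcases lt_or_ge j p with hj | hj
  · exact mul_nonneg (sq_nonneg _) (hpos _ (by omega)).le
  · simp [recTerm, Nat.choose_eq_zero_of_lt (Nat.lt_succ_of_le hj)]

lemma two_mul_recTerm_succ_le (hpos : ∀ m < p, 0 < b m)
    (hinv : ∀ m < p, (m : ℤ) ^ 2 * b (m - 1) ≤ 2 * b m) (j : ℕ) :
    2 * recTerm b p (j + 1) ≤ recTerm b p j := by
  rcases lt_or_ge (j + 1) p with hj | hj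
  · obtain ⟨m, hm⟩ : ∃ m, p = j + 1 + m := ⟨p - (j + 1), by omega⟩
    have hchoose : (p.choose (j + 2) : ℤ) * (j + 2) = p.choose (j + 1) * m := by
      exact_mod_cast (Nat.choose_succ_right_eq p (j + 1)).trans (by rw [hm]; congr 1; omega)
    simp only [recTerm, show p - 1 - (j + 1) = m - 1 by omega, show p - 1 - j = m by omega]
    have hbm : 0 ≤ (p.choose (j + 1) : ℤ) ^ 2 * b m :=
      mul_nonneg (sq_nonneg _) (hpos m (by omega)).le
    refine le_of_mul_le_mul_left ?_ (by positivity : (0 : ℤ) < ((j : ℤ) + 2) ^ 2)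
    calc ((j : ℤ) + 2) ^ 2 * (2 * ((p.choose (j + 1 + 1) : ℤ) ^ 2 * b (m - 1)))
        = 2 * (p.choose (j + 1) : ℤ) ^ 2 * ((m : ℤ) ^ 2 * b (m - 1)) := by
          linear_combination
            2 * b (m - 1) * ((p.choose (j + 2) : ℤ) * (j + 2) + p.choose (j + 1) * m) * hchoose
      _ ≤ 2 * (p.choose (j + 1) : ℤ) ^ 2 * (2 * b m) :=
          mul_le_mul_of_nonneg_left (hinv m (by omega)) (by positivity)
      _ ≤ ((j : ℤ) + 2) ^ 2 * ((p.choose (j + 1) : ℤ) ^ 2 * b m) := by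
          have h4 : (4 : ℤ) ≤ ((j : ℤ) + 2) ^ 2 := by nlinarith [(j.cast_nonneg : (0 : ℤ) ≤ j)]
          nlinarith
  · simpa [recTerm, Nat.choose_eq_zero_of_lt (show p < j + 1 + 1 by omega)]
      using recTerm_nonneg hpos j

lemma sq_mul_pred_le_two_mul
    (hrec : ∑ l ∈ range (p + 1), (-1 : ℤ) ^ l * (p.choose l : ℤ) ^ 2 * b l = 0)
    (hp : 1 ≤ p) (hpos : ∀ m < p, 0 < b m)
    (hinv : ∀ m < p, (m : ℤ) ^ 2 * b (m - 1) ≤ 2 * b m) :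
    (p : ℤ) ^ 2 * b (p - 1) ≤ 2 * b p := by
  have hanti : Antitone (recTerm b p) := antitone_nat_of_succ_le fun j => by
    linarith [two_mul_recTerm_succ_le hpos hinv j, recTerm_nonneg hpos (j + 1)]
  have halt := hanti.sub_le_alternating_sum_range_succ (recTerm_nonneg hpos) (p - 1)
  rw [Nat.sub_add_cancel hp, ← eq_sum_recTerm hrec] at halt
  have hfirst : recTerm b p 0 = (p : ℤ) ^ 2 * b (p - 1) := by simp [recTerm]
  linarith [two_mul_recTerm_succ_le hpos hinv 0]

end Recurrence

/-- Every term of the sequence `b` (OEIS A000275), defined by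
`b 0 = 1` and `∑_{l=0}^{p} (-1)^l C(p,l)^2 b l = 0` for all `p ≥ 1`,
is a positive integer. -/
theorem stmt1 (b : ℕ → ℤ) (hb0 : b 0 = 1)
    (hrec : ∀ p : ℕ, 1 ≤ p →
      (∑ l ∈ Finset.range (p + 1), (-1 : ℤ) ^ l * (p.choose l : ℤ) ^ 2 * b l) = 0) :
    ∀ p : ℕ, 0 < b p := by
  have key : ∀ p, 0 < b p ∧ (p : ℤ) ^ 2 * b (p - 1) ≤ 2 * b p := by
    intro p
    induction p using Nat.strong_induction_on with
    | _ p ih =>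
      rcases Nat.eq_zero_or_pos p with rfl | hp
      · simp [hb0]
      have hpos : ∀ m < p, 0 < b m := fun m hm => (ih m hm).1
      have hinv := sq_mul_pred_le_two_mul (hrec p hp) hp hpos fun m hm => (ih m hm).2
      have hprev : 0 < (p : ℤ) ^ 2 * b (p - 1) := mul_pos (by positivity) (hpos _ (by omega))
      exact ⟨by linarith, hinv⟩
  exact fun p => (key p).1
end

section
/- Let V and E be complex Hermitian vector spaces and let R ∈ Λ^{1,1} V* ⊗ End(E) be a Hermitian curvature-type tensor, viewed as a real (2,2)-form on V ⊕ E with product metric α = ω + h. Then |Λ_ω R|^2 ≤ n |R|^2 where n = dim V, with equality if and only if R = u ∧ ω for some (1,1)-form u pulled back from E. -/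
open Finset

private lemma pair_lemma (n : ℕ) (z : Fin n → ℂ) :
    ∑ j, ∑ k, Complex.normSq (z j - z k)
      = 2 * ((n : ℝ) * ∑ j, Complex.normSq (z j)) - 2 * Complex.normSq (∑ j, z j) := by
  have h0 : (∑ j, z j) * (starRingEnd ℂ) (∑ j, z j)
      = ∑ j, ∑ k, z j * (starRingEnd ℂ) (z k) := by
    rw [map_sum, Finset.sum_mul_sum]
  have hs : Complex.normSq (∑ j, z j) = ∑ j, ∑ k, (z j * (starRingEnd ℂ) (z k)).re := by
    calc Complex.normSq (∑ j, z j) = ((∑ j, z j) * (starRingEnd ℂ) (∑ j, z j)).re := by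
          rw [Complex.mul_conj, Complex.ofReal_re]
      _ = ∑ j, ∑ k, (z j * (starRingEnd ℂ) (z k)).re := by rw [h0]; simp [Complex.re_sum]
  simp_rw [Complex.normSq_sub, Finset.sum_sub_distrib, Finset.sum_add_distrib,
    Finset.sum_const, Finset.card_univ, Fintype.card_fin, nsmul_eq_mul, ← Finset.mul_sum, hs]
  ring

private lemma master_lemma (n : ℕ) (z : Fin n → Fin n → ℂ) :
    (n : ℝ) * ∑ j, ∑ k, Complex.normSq (z j k)
      = Complex.normSq (∑ j, z j j)
        + ((n : ℝ) * ∑ j, ∑ k, (if j = k then 0 else Complex.normSq (z j k))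
          + (1/2) * ∑ j, ∑ k, Complex.normSq (z j j - z k k)) := by
  have hsplit : ∑ j, ∑ k, Complex.normSq (z j k)
      = ∑ j, Complex.normSq (z j j)
        + ∑ j, ∑ k, (if j = k then 0 else Complex.normSq (z j k)) := by
    rw [← Finset.sum_add_distrib]
    refine Finset.sum_congr rfl fun j _ => ?_
    have h1 : Complex.normSq (z j j) = ∑ k, if j = k then Complex.normSq (z j k) else 0 := by
      rw [Finset.sum_ite_eq]; simp
    rw [h1, ← Finset.sum_add_distrib]
    refine Finset.sum_congr rfl fun k _ => ?_
    split <;> simp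
  have hpair := pair_lemma n (fun j => z j j)
  rw [hsplit]
  have hn : (0:ℝ) ≤ (n:ℝ) := Nat.cast_nonneg n
  nlinarith [hpair]

/-- Proposition 2.2: let `R ∈ Λ^{1,1}V* ⊗ End(E)` be a Hermitian
curvature-type tensor on Hermitian vector spaces `V` (dimension `n`) and `E`
(rank `r`), written in orthonormal coordinates as `R j k a b` (the `(a,b)`-entry
of the endomorphism coefficient of `dz_j ∧ dz̄_k`), with the Hermitian symmetry
`R j k a b = conj (R k j b a)`.  With the norms induced by the product metric on
`V ⊕ E`, one has `|Λ_ω R|² ≤ n |R|²`, with equality if and only if `R = u ∧ ω`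
for a `(1,1)`-form `u` pulled back from `E`, i.e. `R j k a b = δ_{jk} u a b`. -/
theorem stmt13 (n r : ℕ) (R : Fin n → Fin n → Fin r → Fin r → ℂ)
    (hHerm : ∀ j k a b, R j k a b = (starRingEnd ℂ) (R k j b a)) :
    (∑ a, ∑ b, Complex.normSq (∑ j, R j j a b))
        ≤ (n : ℝ) * ∑ j, ∑ k, ∑ a, ∑ b, Complex.normSq (R j k a b)
    ∧ ((∑ a, ∑ b, Complex.normSq (∑ j, R j j a b))
          = (n : ℝ) * ∑ j, ∑ k, ∑ a, ∑ b, Complex.normSq (R j k a b)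
        ↔ ∃ u : Fin r → Fin r → ℂ,
            ∀ j k a b, R j k a b = (if j = k then 1 else 0) * u a b) := by
  have hswap : ∑ j, ∑ k, ∑ a, ∑ b, Complex.normSq (R j k a b)
      = ∑ a, ∑ b, ∑ j, ∑ k, Complex.normSq (R j k a b) := by
    calc ∑ j, ∑ k, ∑ a, ∑ b, Complex.normSq (R j k a b)
        = ∑ j, ∑ a, ∑ k, ∑ b, Complex.normSq (R j k a b) :=
          Finset.sum_congr rfl fun j _ => Finset.sum_comm
      _ = ∑ a, ∑ j, ∑ k, ∑ b, Complex.normSq (R j k a b) := Finset.sum_comm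
      _ = ∑ a, ∑ j, ∑ b, ∑ k, Complex.normSq (R j k a b) :=
          Finset.sum_congr rfl fun a _ => Finset.sum_congr rfl fun j _ => Finset.sum_comm
      _ = ∑ a, ∑ b, ∑ j, ∑ k, Complex.normSq (R j k a b) :=
          Finset.sum_congr rfl fun a _ => Finset.sum_comm
  set g : Fin r → Fin r → ℝ := fun a b =>
    (n : ℝ) * ∑ j, ∑ k, (if j = k then 0 else Complex.normSq (R j k a b))
      + (1/2) * ∑ j, ∑ k, Complex.normSq (R j j a b - R k k a b) with hg
  have key : (n : ℝ) * ∑ j, ∑ k, ∑ a, ∑ b, Complex.normSq (R j k a b)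
      = (∑ a, ∑ b, Complex.normSq (∑ j, R j j a b)) + ∑ a, ∑ b, g a b := by
    rw [hswap, Finset.mul_sum, ← Finset.sum_add_distrib]
    refine Finset.sum_congr rfl fun a _ => ?_
    rw [Finset.mul_sum, ← Finset.sum_add_distrib]
    refine Finset.sum_congr rfl fun b _ => ?_
    exact master_lemma n (fun j k => R j k a b)
  have hoff_nonneg : ∀ a b, (0:ℝ) ≤ ∑ j, ∑ k, (if j = k then 0 else Complex.normSq (R j k a b)) :=
    fun a b => Finset.sum_nonneg fun j _ => Finset.sum_nonneg fun k _ => by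
      split
      · exact le_rfl
      · exact Complex.normSq_nonneg _
  have hpair_nonneg : ∀ a b, (0:ℝ) ≤ ∑ j, ∑ k, Complex.normSq (R j j a b - R k k a b) :=
    fun a b => Finset.sum_nonneg fun j _ => Finset.sum_nonneg fun k _ => Complex.normSq_nonneg _
  have hg_nonneg : ∀ a b, (0:ℝ) ≤ g a b := fun a b => by
    have h1 := hoff_nonneg a b
    have h2 := hpair_nonneg a b
    have hn : (0:ℝ) ≤ (n:ℝ) := Nat.cast_nonneg n
    rw [hg]
    positivity
  have hsum_nonneg : (0:ℝ) ≤ ∑ a, ∑ b, g a b :=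
    Finset.sum_nonneg fun a _ => Finset.sum_nonneg fun b _ => hg_nonneg a b
  refine ⟨by linarith, ?_⟩
  constructor
  · intro heq
    rcases Nat.eq_zero_or_pos n with hn0 | hnpos
    · subst hn0
      exact ⟨fun a b => 0, fun j => j.elim0⟩
    · have hzero : ∑ a, ∑ b, g a b = 0 := by linarith
      have hgz : ∀ a b, g a b = 0 := by
        intro a b
        have h1 := (Finset.sum_eq_zero_iff_of_nonneg
          (fun a _ => Finset.sum_nonneg fun b _ => hg_nonneg a b)).mp hzero a (Finset.mem_univ a)
        exact (Finset.sum_eq_zero_iff_of_nonneg (fun b _ => hg_nonneg a b)).mp h1 b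
          (Finset.mem_univ b)
      have hcomp : ∀ a b,
          ∑ j, ∑ k, (if j = k then 0 else Complex.normSq (R j k a b)) = 0 ∧
          ∑ j, ∑ k, Complex.normSq (R j j a b - R k k a b) = 0 := by
        intro a b
        have h1 := hoff_nonneg a b
        have h2 := hpair_nonneg a b
        have h3 := hgz a b
        rw [hg] at h3
        have hnp : (0:ℝ) < (n:ℝ) := by exact_mod_cast hnpos
        constructor
        · nlinarith
        · nlinarith
      have hoffz : ∀ a b j k, j ≠ k → R j k a b = 0 := by
        intro a b j k hjk
        have h1 := (hcomp a b).1
        have h2 := (Finset.sum_eq_zero_iff_of_nonneg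
          (fun j _ => Finset.sum_nonneg fun k _ => by
            split
            · exact le_rfl
            · exact Complex.normSq_nonneg _)).mp h1 j (Finset.mem_univ j)
        have h3 := (Finset.sum_eq_zero_iff_of_nonneg (fun k _ => by
            split
            · exact le_rfl
            · exact Complex.normSq_nonneg _)).mp h2 k (Finset.mem_univ k)
        rw [if_neg hjk] at h3
        exact Complex.normSq_eq_zero.mp h3
      have hdiag : ∀ a b j k, R j j a b = R k k a b := by
        intro a b j k
        have h1 := (hcomp a b).2
        have h2 := (Finset.sum_eq_zero_iff_of_nonneg
          (fun j _ => Finset.sum_nonneg fun k _ => Complex.normSq_nonneg _)).mp h1 j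
          (Finset.mem_univ j)
        have h3 := (Finset.sum_eq_zero_iff_of_nonneg
          (fun k _ => Complex.normSq_nonneg _)).mp h2 k (Finset.mem_univ k)
        have := Complex.normSq_eq_zero.mp h3
        linear_combination this
      set j0 : Fin n := ⟨0, hnpos⟩
      refine ⟨fun a b => R j0 j0 a b, fun j k a b => ?_⟩
      by_cases hjk : j = k
      · subst hjk
        rw [if_pos rfl, one_mul]
        exact hdiag a b j j0
      · rw [if_neg hjk, zero_mul]
        exact hoffz a b j k hjk
  · rintro ⟨u, hu⟩
    have hdiagsum : ∀ a b, (∑ j, R j j a b) = (n : ℂ) * u a b := by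
      intro a b
      simp [hu, Finset.sum_const, Finset.card_univ]
    have hbig : ∑ j, ∑ k, ∑ a, ∑ b, Complex.normSq (R j k a b)
        = (n : ℝ) * ∑ a, ∑ b, Complex.normSq (u a b) := by
      have hper : ∀ (j k : Fin n) (a b : Fin r),
          Complex.normSq (R j k a b) = if j = k then Complex.normSq (u a b) else 0 := by
        intro j k a b
        rw [hu]
        split <;> simp
      simp_rw [hper]
      simp [Finset.sum_ite_eq, Finset.sum_const, Finset.card_univ]
    rw [hbig]
    simp_rw [hdiagsum, Complex.normSq_mul, Complex.normSq_natCast]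
    simp [Finset.mul_sum, mul_assoc]
end

section
/- Let E → X be a holomorphic vector bundle with Hermitian metric h over a Hermitian manifold (X, ω) of dimension n ≥ 2, with curvature form (i/2π)Θ and Chern forms c_1, c_2. Then pointwise on X, |(i/2π)Θ|^2 ω^n/n! = (2c_2 - c_1^2) ∧ ω^{n-2}/(n-2)! + |tr_ω (i/2π)Θ|_h^2 ω^n/n!. -/
noncomputable section

/-- For `(1,1)`-forms `u, v` on an `n`-dimensional Hermitian vector space, given in
orthonormal coordinates by coefficient matrices `A, B` (so `u = i ∑ A j k dz_j ∧ dz̄_k`),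
`wedgeCoeff n A B` is the coefficient of `u ∧ v ∧ ω^{n-2}/(n-2)!` relative to the
volume form `ω^n/n!`:  `u ∧ v ∧ ω^{n-2}/(n-2)! = ((tr A)(tr B) - tr (A B)) ω^n/n!`. -/
def wedgeCoeff (n : ℕ) (A B : Fin n → Fin n → ℂ) : ℂ :=
  (∑ j, A j j) * (∑ k, B k k) - ∑ j, ∑ k, A j k * B k j

/-- The coefficient matrix of the first Chern form `c₁ = tr ((i/2π)Θ)` of a curvature
tensor `R` given in orthonormal coordinates (`R j k a b` is the `(a,b)`-entry of the
endomorphism coefficient of `dz_j ∧ dz̄_k` of `(i/2π)Θ`). -/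
def chernOne (n r : ℕ) (R : Fin n → Fin n → Fin r → Fin r → ℂ) :
    Fin n → Fin n → ℂ :=
  fun j k => ∑ a, R j k a a

/-- The coefficient of `c₁² ∧ ω^{n-2}/(n-2)!` relative to `ω^n/n!`. -/
def chernOneSqCoeff (n r : ℕ) (R : Fin n → Fin n → Fin r → Fin r → ℂ) : ℂ :=
  wedgeCoeff n (chernOne n r R) (chernOne n r R)

/-- The coefficient of `c₂ ∧ ω^{n-2}/(n-2)!` relative to `ω^n/n!`, where
`c₂ = (1/2)((tr (i/2π)Θ)² - tr(((i/2π)Θ)²))`. -/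
def chernTwoCoeff (n r : ℕ) (R : Fin n → Fin n → Fin r → Fin r → ℂ) : ℂ :=
  (1 / 2) * (chernOneSqCoeff n r R
    - ∑ a, ∑ b, wedgeCoeff n (fun j k => R j k a b) (fun j k => R j k b a))

/-- for a Hermitian holomorphic vector bundle `(E,h)` of rank `r` over a
Hermitian manifold `(X,ω)` of dimension `n ≥ 2`, pointwise on `X`
`|(i/2π)Θ|² ω^n/n! = (2c₂ - c₁²) ∧ ω^{n-2}/(n-2)! + |tr_ω (i/2π)Θ|_h² ω^n/n!`.
Being pointwise, this is a linear-algebra identity for the Hermitian curvature tensor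
`R = (i/2π)Θ ∈ Λ^{1,1}V* ⊗ End(E)` written in orthonormal coordinates, with
`|R|² = ∑ |R j k a b|²` and `tr_ω R = ∑_j R j j ∈ End(E)`. -/
theorem stmt14 (n r : ℕ) (hn : 2 ≤ n) (R : Fin n → Fin n → Fin r → Fin r → ℂ)
    (hHerm : ∀ j k a b, R j k a b = (starRingEnd ℂ) (R k j b a)) :
    (∑ j, ∑ k, ∑ a, ∑ b, (Complex.normSq (R j k a b) : ℂ))
      = (2 * chernTwoCoeff n r R - chernOneSqCoeff n r R)
        + ∑ a, ∑ b, (Complex.normSq (∑ j, R j j a b) : ℂ) := by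
  have h2 : (2 * chernTwoCoeff n r R - chernOneSqCoeff n r R)
      = - ∑ a, ∑ b, wedgeCoeff n (fun j k => R j k a b) (fun j k => R j k b a) := by
    unfold chernTwoCoeff; ring
  rw [h2]
  have hw : ∀ a b, wedgeCoeff n (fun j k => R j k a b) (fun j k => R j k b a)
      = (Complex.normSq (∑ j, R j j a b) : ℂ)
        - ∑ j, ∑ k, (Complex.normSq (R j k a b) : ℂ) := by
    intro a b
    unfold wedgeCoeff
    congr 1
    · have : (∑ k, R k k b a) = (starRingEnd ℂ) (∑ j, R j j a b) := by
        rw [map_sum]; exact Finset.sum_congr rfl fun k _ => hHerm k k b a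
      rw [this, Complex.mul_conj]
    · refine Finset.sum_congr rfl fun j _ => Finset.sum_congr rfl fun k _ => ?_
      show R j k a b * R k j b a = _
      rw [hHerm k j b a, Complex.mul_conj]
  simp only [hw, Finset.sum_sub_distrib, neg_sub]
  rw [sub_add_cancel]
  calc (∑ j, ∑ k, ∑ a, ∑ b, (Complex.normSq (R j k a b) : ℂ))
      = ∑ j, ∑ a, ∑ k, ∑ b, (Complex.normSq (R j k a b) : ℂ) :=
        Finset.sum_congr rfl fun j _ => Finset.sum_comm
    _ = ∑ j, ∑ a, ∑ b, ∑ k, (Complex.normSq (R j k a b) : ℂ) :=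
        Finset.sum_congr rfl fun j _ => Finset.sum_congr rfl fun a _ => Finset.sum_comm
    _ = ∑ a, ∑ j, ∑ b, ∑ k, (Complex.normSq (R j k a b) : ℂ) := Finset.sum_comm
    _ = ∑ a, ∑ b, ∑ j, ∑ k, (Complex.normSq (R j k a b) : ℂ) :=
        Finset.sum_congr rfl fun a _ => Finset.sum_comm
end
end
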